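/- Let σ be the signal orderings induced by value functions v. Suppose that for every family σ̃ = (σ̃_i(s_{-i}))_{i, s_{-i}} in which each σ̃_i(s_{-i}) is a strict total order on [k] (irreflexive, transitive, and for all a ≠ b either (a,b) ∈ σ̃_i(s_{-i}) or (b,a) ∈ σ̃_i(s_{-i})) extending σ (σ_i(s_{-i}) ⊆ σ̃_i(s_{-i}) for all i, s_{-i}), every extreme point of T(σ̃) is integral. Then every extreme point of T(σ) is integral. -/

import Mathlib

/-!
Break the ties of the orderings induced by `v` at a given extreme point `y` of `T(σ)`:
compare signals lexicographically by the value `v`, then by the allocation `y`, then by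
index. This is a strict total order `σ̃` extending `σ`, and `y` is monotone along it, so
`y ∈ T(σ̃) ⊆ T(σ)`; an extreme point of the larger polytope lying in the smaller one is
extreme there too, hence integral by hypothesis.
-/

namespace Stmt6

variable {n k : ℕ}

/-- The profile obtained from the sub-profile `t` (signals of agents other than `i`)
by giving agent `i` the signal `a`. -/
def extendProf (i : Fin n) (a : Fin k) (t : {j : Fin n // j ≠ i} → Fin k) : Fin n → Fin k :=
  fun j => if h : j = i then a else t ⟨j, h⟩

/-- Membership in the truthful polytope `T(τ)` for a family `τ` of binary relations on
signals, indexed by an agent and the signals of the other agents. -/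
def InT (τ : (i : Fin n) → ({j : Fin n // j ≠ i} → Fin k) → Fin k → Fin k → Prop)
    (x : Fin n → (Fin n → Fin k) → ℝ) : Prop :=
  (∀ i s, 0 ≤ x i s ∧ x i s ≤ 1) ∧ (∀ s, ∑ i, x i s = 1) ∧
  (∀ (i : Fin n) (t : {j : Fin n // j ≠ i} → Fin k) (a b : Fin k),
    τ i t a b → x i (extendProf i a t) ≤ x i (extendProf i b t))

/-- The signal orderings induced by value functions `v`. -/
def sigmaOf (v : Fin n → (Fin n → Fin k) → ℝ) :
    (i : Fin n) → ({j : Fin n // j ≠ i} → Fin k) → Fin k → Fin k → Prop :=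
  fun i t a b => v i (extendProf i a t) < v i (extendProf i b t)

theorem InT.mono {τ τ' : (i : Fin n) → ({j : Fin n // j ≠ i} → Fin k) → Fin k → Fin k → Prop}
    (hττ' : ∀ i t a b, τ i t a b → τ' i t a b) {x : Fin n → (Fin n → Fin k) → ℝ}
    (hx : InT τ' x) : InT τ x :=
  ⟨hx.1, hx.2.1, fun i t a b h => hx.2.2 i t a b (hττ' i t a b h)⟩

theorem mem_extremePoints_InT_of_le
    {τ τ' : (i : Fin n) → ({j : Fin n // j ≠ i} → Fin k) → Fin k → Fin k → Prop}
    (hττ' : ∀ i t a b, τ i t a b → τ' i t a b) {y : Fin n → (Fin n → Fin k) → ℝ}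
    (hy : y ∈ Set.extremePoints ℝ {x | InT τ x}) (hy' : InT τ' y) :
    y ∈ Set.extremePoints ℝ {x | InT τ' x} :=
  inter_extremePoints_subset_extremePoints_of_subset (fun _ hx => hx.mono hττ') ⟨hy', hy⟩

def tieBreakKey (v y : Fin n → (Fin n → Fin k) → ℝ) (i : Fin n)
    (t : {j : Fin n // j ≠ i} → Fin k) (a : Fin k) : ℝ ×ₗ (ℝ ×ₗ Fin k) :=
  toLex (v i (extendProf i a t), toLex (y i (extendProf i a t), a))

def tieBreak (v y : Fin n → (Fin n → Fin k) → ℝ) :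
    (i : Fin n) → ({j : Fin n // j ≠ i} → Fin k) → Fin k → Fin k → Prop :=
  fun i t a b => tieBreakKey v y i t a < tieBreakKey v y i t b

section tieBreak

variable (v y : Fin n → (Fin n → Fin k) → ℝ)

theorem tieBreakKey_injective (i : Fin n) (t : {j : Fin n // j ≠ i} → Fin k) :
    Function.Injective (tieBreakKey v y i t) := fun _ _ h =>
  congrArg (fun p => (ofLex (ofLex p).2).2) h

theorem tieBreak_irrefl (i t a) : ¬ tieBreak v y i t a a :=
  lt_irrefl _

theorem tieBreak_trans (i t a b c) :
    tieBreak v y i t a b → tieBreak v y i t b c → tieBreak v y i t a c :=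
  lt_trans

theorem tieBreak_total (i t a b) (hab : a ≠ b) : tieBreak v y i t a b ∨ tieBreak v y i t b a :=
  lt_or_gt_of_ne ((tieBreakKey_injective v y i t).ne hab)

theorem tieBreak_of_sigmaOf (i t a b) (h : sigmaOf v i t a b) : tieBreak v y i t a b :=
  Prod.Lex.toLex_lt_toLex.2 (Or.inl h)

theorem InT_tieBreak {y} (hy : InT (sigmaOf v) y) : InT (tieBreak v y) y := by
  refine ⟨hy.1, hy.2.1, fun i t a b hab => ?_⟩
  rcases Prod.Lex.toLex_lt_toLex.1 hab with hv | ⟨-, hy'⟩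
  · exact hy.2.2 i t a b hv
  · rcases Prod.Lex.toLex_lt_toLex.1 hy' with hlt | ⟨heq, -⟩
    · exact hlt.le
    · exact heq.le

end tieBreak

theorem stmt6 (v : Fin n → (Fin n → Fin k) → ℝ)
    (H : ∀ τ : (i : Fin n) → ({j : Fin n // j ≠ i} → Fin k) → Fin k → Fin k → Prop,
      (∀ i t a, ¬ τ i t a a) →
      (∀ i t a b c, τ i t a b → τ i t b c → τ i t a c) →
      (∀ i t a b, a ≠ b → τ i t a b ∨ τ i t b a) →
      (∀ i t a b, sigmaOf v i t a b → τ i t a b) →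
      ∀ y ∈ Set.extremePoints ℝ {x : Fin n → (Fin n → Fin k) → ℝ | InT τ x},
        ∀ i s, y i s = 0 ∨ y i s = 1) :
    ∀ y ∈ Set.extremePoints ℝ {x : Fin n → (Fin n → Fin k) → ℝ | InT (sigmaOf v) x},
      ∀ i s, y i s = 0 ∨ y i s = 1 := fun y hy =>
  H (tieBreak v y) (tieBreak_irrefl v y) (tieBreak_trans v y) (tieBreak_total v y)
    (tieBreak_of_sigmaOf v y) y
    (mem_extremePoints_InT_of_le (tieBreak_of_sigmaOf v y) hy (InT_tieBreak v hy.1))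

end Stmt6
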